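/- arXiv:1703.10716 — 3 statements merged into one kernel-verified Lean document; each statement's English description precedes it below -/
import Mathlib

section
/- Let {X_n} be i.i.d. random variables with common distribution F, and let ρ₁ = sup{r ≥ 0 : lim_{x→∞} x^r P(X > x) = 0}. If 0 < ρ₁ ≤ ∞, then limsup_{n→∞} (log max_{1≤k≤n} X_k)/(log n) ≤ 1/ρ₁ almost surely, where log x = ln(e ∨ x) and 1/∞ = 0. -/
/-!
On the dyadic block `2^j ≤ n < 2^(j+1)` one has `max_{k ≤ n} X_k ≤ n^q` as soon as all of
`X_0, …, X_{2^(j+1)-1}` stay below `(2^j)^q`. By the union bound, and since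
`P(X > x) ≤ x^(-r)` for large `x` whenever `r < ρ₁`, the block fails with probability at most
`2^(j+1) (2^j)^(-q r)`, which is summable once `q r > 1`. Borel–Cantelli gives
`log max_{k ≤ n} X_k ≤ q log n` eventually, and letting `q ↓ 1/ρ₁` along the rationals gives the
bound on the `limsup`.
-/

open MeasureTheory ProbabilityTheory Filter
open scoped ENNReal

/-- `log x = ln (e ∨ x)` as in the paper. -/
noncomputable def Log (x : ℝ) : ℝ := Real.log (max (Real.exp 1) x)

/-- `pmax X n ω = max_{1 ≤ k ≤ n} X_k(ω)` (indexed `0,…,n-1`), junk value at `n = 0`. -/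
noncomputable def pmax {Ω : Type*} (X : ℕ → Ω → ℝ) (n : ℕ) (ω : Ω) : ℝ :=
  if h : n = 0 then X 0 ω
  else (Finset.range n).sup' (Finset.nonempty_range_iff.mpr h) fun k => X k ω

open Topology

lemma Log_of_exp_one_le {x : ℝ} (hx : Real.exp 1 ≤ x) : Log x = Real.log x := by
  rw [Log, max_eq_right hx]

lemma Log_monotone : Monotone Log := fun _ _ hxy =>
  Real.log_le_log (lt_of_lt_of_le (Real.exp_pos 1) (le_max_left _ _)) (max_le_max le_rfl hxy)

lemma eventually_Log_div_Log_le {q : ℝ} (hq : 0 < q) :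
    ∀ᶠ n : ℕ in atTop, ∀ y, y ≤ (n : ℝ) ^ q → Log y / Log n ≤ q := by
  have hn := tendsto_natCast_atTop_atTop (R := ℝ)
  filter_upwards [hn.eventually_ge_atTop (Real.exp 1),
    ((tendsto_rpow_atTop hq).comp hn).eventually_ge_atTop (Real.exp 1)] with n hn hnq y hy
  have hn0 : (0 : ℝ) < n := (Real.exp_pos 1).trans_le hn
  have hlog : 0 < Real.log n := Real.log_pos ((Real.one_lt_exp_iff.2 one_pos).trans_le hn)
  rw [Log_of_exp_one_le hn, div_le_iff₀ hlog]
  calc Log y ≤ Log ((n : ℝ) ^ q) := Log_monotone hy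
    _ = q * Real.log n := by rw [Log_of_exp_one_le (x := (n : ℝ) ^ q) hnq, Real.log_rpow hn0]

lemma eventually_pmax_le_rpow {Ω : Type*} {X : ℕ → Ω → ℝ} {ω : Ω} {q : ℝ} (hq : 0 ≤ q)
    (h : ∀ᶠ j in atTop, ∀ k < 2 ^ (j + 1), X k ω ≤ ((2 : ℝ) ^ j) ^ q) :
    ∀ᶠ n : ℕ in atTop, pmax X n ω ≤ (n : ℝ) ^ q := by
  obtain ⟨J, hJ⟩ := eventually_atTop.1 h
  filter_upwards [eventually_ge_atTop (2 ^ J)] with n hn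
  have hn0 : n ≠ 0 := ((Nat.two_pow_pos J).trans_le hn).ne'
  rw [pmax, dif_neg hn0]
  refine Finset.sup'_le _ _ fun k hk => ?_
  have hkn : k < 2 ^ (Nat.log 2 n + 1) :=
    (Finset.mem_range.1 hk).trans (Nat.lt_pow_succ_log_self one_lt_two n)
  calc X k ω ≤ ((2 : ℝ) ^ Nat.log 2 n) ^ q :=
        hJ _ (Nat.le_log_of_pow_le one_lt_two hn) k hkn
    _ ≤ (n : ℝ) ^ q :=
        Real.rpow_le_rpow (by positivity) (by exact_mod_cast Nat.pow_log_le_self 2 hn0) hq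

lemma summable_two_pow_mul_of_tendsto_rpow_mul {p : ℝ → ℝ} (hp : ∀ x, 0 ≤ p x) {q r : ℝ}
    (hq : 0 < q) (hqr : 1 < q * r) (h : Tendsto (fun x => x ^ r * p x) atTop (𝓝 0)) :
    Summable fun j : ℕ => (2 : ℝ) ^ (j + 1) * p (((2 : ℝ) ^ j) ^ q) := by
  have hp_le : ∀ᶠ x in atTop, p x ≤ x ^ (-r) := by
    filter_upwards [h.eventually (eventually_le_nhds one_pos), eventually_gt_atTop 0]
      with x hx hx0
    rw [Real.rpow_neg hx0.le, ← one_div, le_div_iff₀' (Real.rpow_pos_of_pos hx0 r)]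
    exact hx
  have hc : Tendsto (fun j : ℕ => ((2 : ℝ) ^ j) ^ q) atTop atTop :=
    (tendsto_rpow_atTop hq).comp (tendsto_pow_atTop_atTop_of_one_lt one_lt_two)
  have hgeom : Summable fun j : ℕ => 2 * ((2 : ℝ) ^ (1 - q * r)) ^ j :=
    (summable_geometric_of_lt_one (by positivity)
      (Real.rpow_lt_one_of_one_lt_of_neg one_lt_two (by linarith))).mul_left 2
  refine hgeom.of_norm_bounded_eventually_nat ?_
  filter_upwards [hc.eventually hp_le] with j hj
  have h2j : (0 : ℝ) < 2 ^ j := by positivity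
  rw [Real.norm_of_nonneg (mul_nonneg (by positivity) (hp _))]
  calc (2 : ℝ) ^ (j + 1) * p (((2 : ℝ) ^ j) ^ q)
      ≤ 2 ^ (j + 1) * (((2 : ℝ) ^ j) ^ q) ^ (-r) := by gcongr
    _ = 2 * ((2 : ℝ) ^ (1 - q * r)) ^ j := by
      rw [← Real.rpow_mul h2j.le, ← Real.rpow_natCast (2 ^ (1 - q * r)),
        ← Real.rpow_mul zero_le_two, mul_comm (1 - q * r), Real.rpow_mul zero_le_two,
        Real.rpow_natCast, Real.rpow_sub h2j, Real.rpow_one, pow_succ, mul_neg,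
        Real.rpow_neg h2j.le]
      ring

section IdentDistrib

variable {Ω : Type*} [MeasurableSpace Ω] {μ : Measure Ω} [IsFiniteMeasure μ]

lemma ae_eventually_forall_lt_le_of_summable {X : ℕ → Ω → ℝ}
    (hident : ∀ n, IdentDistrib (X n) (X 0) μ μ) {N : ℕ → ℕ} {c : ℕ → ℝ}
    (hsum : Summable fun j => (N j : ℝ) * (μ {ω | X 0 ω > c j}).toReal) :
    ∀ᵐ ω ∂μ, ∀ᶠ j in atTop, ∀ k < N j, X k ω ≤ c j := by
  set E : ℕ → Set Ω := fun j => ⋃ k ∈ Finset.range (N j), {ω | X k ω > c j}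
  have htail : ∀ k x, μ {ω | X k ω > x} = μ {ω | X 0 ω > x} := fun k x =>
    (hident k).measure_mem_eq (s := Set.Ioi x) measurableSet_Ioi
  have hE : ∀ j, μ (E j) ≤ ENNReal.ofReal ((N j : ℝ) * (μ {ω | X 0 ω > c j}).toReal) := by
    intro j
    calc μ (E j) ≤ ∑ k ∈ Finset.range (N j), μ {ω | X k ω > c j} :=
          measure_biUnion_finset_le _ _
      _ = N j * μ {ω | X 0 ω > c j} := by
          rw [Finset.sum_congr rfl fun k _ => htail k (c j),
            Finset.sum_const, Finset.card_range, nsmul_eq_mul]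
      _ = ENNReal.ofReal ((N j : ℝ) * (μ {ω | X 0 ω > c j}).toReal) := by
          rw [ENNReal.ofReal_mul (Nat.cast_nonneg _), ENNReal.ofReal_natCast,
            ENNReal.ofReal_toReal (measure_ne_top μ _)]
  have hfin : ∑' j, μ (E j) ≠ ∞ := by
    refine ne_top_of_le_ne_top ?_ (ENNReal.tsum_le_tsum hE)
    rw [← ENNReal.ofReal_tsum_of_nonneg (fun j => by positivity) hsum]
    exact ENNReal.ofReal_ne_top
  filter_upwards [ae_eventually_notMem hfin] with ω hω
  filter_upwards [hω] with j hj k hk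
  by_contra hlt
  exact hj (Set.mem_biUnion (Finset.mem_range.2 hk) (not_le.1 hlt))

lemma ae_eventually_Log_pmax_div_Log_le {X : ℕ → Ω → ℝ}
    (hident : ∀ n, IdentDistrib (X n) (X 0) μ μ) {q r : ℝ} (hq : 0 < q) (hqr : 1 < q * r)
    (h : Tendsto (fun x : ℝ => x ^ r * (μ {ω | X 0 ω > x}).toReal) atTop (𝓝 0)) :
    ∀ᵐ ω ∂μ, ∀ᶠ n : ℕ in atTop, Log (pmax X n ω) / Log n ≤ q := by
  have hsum := summable_two_pow_mul_of_tendsto_rpow_mul (fun _ => ENNReal.toReal_nonneg) hq hqr h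
  filter_upwards [ae_eventually_forall_lt_le_of_summable (N := fun j => 2 ^ (j + 1)) hident
    (by simpa using hsum)] with ω hω
  filter_upwards [eventually_pmax_le_rpow hq.le hω, eventually_Log_div_Log_le hq]
    with n hmax hLog using hLog _ hmax

end IdentDistrib

lemma pos_and_exists_one_lt_mul_of_inv_sSup_lt {S : Set ℝ} {q : ℝ}
    (h : (sSup (ENNReal.ofReal '' S))⁻¹ < ENNReal.ofReal q) : 0 < q ∧ ∃ r ∈ S, 1 < q * r := by
  have hq : 0 < q := ENNReal.ofReal_pos.1 (lt_of_le_of_lt zero_le h)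
  obtain ⟨_, ⟨r, hr, rfl⟩, hlt⟩ := lt_sSup_iff.1 (ENNReal.inv_lt_iff_inv_lt.1 h)
  rw [← ENNReal.ofReal_inv_of_pos hq,
    ENNReal.ofReal_lt_ofReal_iff_of_nonneg (inv_nonneg.2 hq.le), inv_lt_iff_one_lt_mul₀' hq] at hlt
  exact ⟨hq, r, hr, hlt⟩

lemma limsup_ofReal_le_of_forall_rat {α : Type*} {f : Filter α} {u : α → ℝ} {a : ℝ≥0∞}
    (h : ∀ q : ℚ, a < ENNReal.ofReal q → ∀ᶠ n in f, u n ≤ q) :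
    limsup (fun n => ENNReal.ofReal (u n)) f ≤ a := by
  refine le_of_forall_gt fun b hab => ?_
  obtain ⟨q, -, haq, hqb⟩ := ENNReal.lt_iff_exists_rat_btwn.1 hab
  refine lt_of_le_of_lt (limsup_le_of_le (by isBoundedDefault) ?_) hqb
  filter_upwards [h q haq] with n hn using ENNReal.ofReal_le_ofReal hn

theorem stmt4_general {Ω : Type*} [MeasurableSpace Ω] (μ : Measure Ω) [IsProbabilityMeasure μ]
    (X : ℕ → Ω → ℝ)
    (hident : ∀ n, IdentDistrib (X n) (X 0) μ μ)
    (ρ₁ : ℝ≥0∞)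
    (hρ₁ : ρ₁ = sSup (ENNReal.ofReal '' {r : ℝ | 0 ≤ r ∧
        Tendsto (fun x : ℝ => x ^ r * (μ {ω | X 0 ω > x}).toReal) atTop (nhds 0)})) :
    ∀ᵐ ω ∂μ,
      Filter.limsup (fun n : ℕ => ENNReal.ofReal (Log (pmax X n ω) / Log n)) atTop ≤ ρ₁⁻¹ := by
  have key : ∀ q : ℚ, ∀ᵐ ω ∂μ,
      ρ₁⁻¹ < ENNReal.ofReal q → ∀ᶠ n : ℕ in atTop, Log (pmax X n ω) / Log n ≤ q := by
    intro q
    refine eventually_imp_distrib_left.2 fun hq => ?_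
    obtain ⟨hq0, r, ⟨-, hr⟩, hqr⟩ := pos_and_exists_one_lt_mul_of_inv_sSup_lt (hρ₁ ▸ hq)
    exact ae_eventually_Log_pmax_div_Log_le hident hq0 hqr hr
  filter_upwards [ae_all_iff.2 key] with ω hω using limsup_ofReal_le_of_forall_rat hω

theorem stmt4 {Ω : Type*} [MeasurableSpace Ω] (μ : Measure Ω) [IsProbabilityMeasure μ]
    (X : ℕ → Ω → ℝ) (hmeas : ∀ n, Measurable (X n))
    (hindep : iIndepFun X μ)
    (hident : ∀ n, IdentDistrib (X n) (X 0) μ μ)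
    (ρ₁ : ℝ≥0∞)
    (hρ₁ : ρ₁ = sSup (ENNReal.ofReal '' {r : ℝ | 0 ≤ r ∧
        Tendsto (fun x : ℝ => x ^ r * (μ {ω | X 0 ω > x}).toReal) atTop (nhds 0)}))
    (hpos : 0 < ρ₁) :
    ∀ᵐ ω ∂μ,
      Filter.limsup (fun n : ℕ => ENNReal.ofReal (Log (pmax X n ω) / Log n)) atTop ≤ ρ₁⁻¹ :=
  stmt4_general μ X hident ρ₁ hρ₁
end

section
/- Let X be a random variable and 0 ≤ ρ < ∞. Then lim_{x→∞} x^r P(X > x) = 0 for all r < ρ and = ∞ for all r > ρ holds if and only if there exists a function L : (0,∞) → (0,∞) with P(X > x) ~ L(x)/x^ρ as x → ∞ and ln L(x)/ln x → 0. -/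
open MeasureTheory ProbabilityTheory Filter
open scoped ENNReal

/-!
Both conditions say that `log P(X > x) / log x → -ρ`. For the power conditions this is because
`x ^ r * P(X > x) = exp (log x * (r + log P(X > x) / log x))`. For the second condition take
`L x = x ^ ρ * P(X > x)`; conversely `log L(x) / log x → 0` and `log` of a ratio tending to `1`
is `o(log x)`.
-/

open Real Topology

section LogRatio

variable {f : ℝ → ℝ}

lemma rpow_mul_eventuallyEq_exp (hf : ∀ᶠ x in atTop, 0 < f x) (r : ℝ) :
    (fun x => exp (log x * (r + log (f x) / log x))) =ᶠ[atTop] fun x => x ^ r * f x := by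
  filter_upwards [hf, eventually_gt_atTop 1] with x hfx hx
  rw [mul_add, mul_div_cancel₀ _ (log_pos hx).ne', exp_add, exp_log hfx,
    ← rpow_def_of_pos (by linarith)]

lemma tendsto_rpow_mul_nhds_zero_of_tendsto_log_div_log (hf : ∀ᶠ x in atTop, 0 < f x) {c : ℝ}
    (hc : Tendsto (fun x => log (f x) / log x) atTop (𝓝 c)) {r : ℝ} (hrc : r + c < 0) :
    Tendsto (fun x => x ^ r * f x) atTop (𝓝 0) :=
  (tendsto_exp_atBot.comp <| tendsto_log_atTop.atTop_mul_neg hrc (tendsto_const_nhds.add hc)).congr'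
    (rpow_mul_eventuallyEq_exp hf r)

lemma tendsto_rpow_mul_atTop_of_tendsto_log_div_log (hf : ∀ᶠ x in atTop, 0 < f x) {c : ℝ}
    (hc : Tendsto (fun x => log (f x) / log x) atTop (𝓝 c)) {r : ℝ} (hrc : 0 < r + c) :
    Tendsto (fun x => x ^ r * f x) atTop atTop :=
  (tendsto_exp_atTop.comp <| tendsto_log_atTop.atTop_mul_pos hrc (tendsto_const_nhds.add hc)).congr'
    (rpow_mul_eventuallyEq_exp hf r)

lemma log_div_log_le_neg_iff {x y r : ℝ} (hx : 1 < x) (hy : 0 < y) :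
    log y / log x ≤ -r ↔ x ^ r * y ≤ 1 := by
  have hx₀ : 0 < x := by linarith
  rw [div_le_iff₀ (log_pos hx), ← log_nonpos_iff (by positivity),
    log_mul (rpow_pos_of_pos hx₀ r).ne' hy.ne', log_rpow hx₀]
  constructor <;> intro h <;> linarith

lemma neg_lt_log_div_log_iff {x y r : ℝ} (hx : 1 < x) (hy : 0 < y) :
    -r < log y / log x ↔ 1 < x ^ r * y := by
  simpa only [not_le] using (log_div_log_le_neg_iff hx hy).not

lemma tendsto_log_div_log_of_rpow_mul (hf : ∀ᶠ x in atTop, 0 < f x) {ρ : ℝ}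
    (hlt : ∀ r < ρ, ∀ᶠ x in atTop, x ^ r * f x ≤ 1)
    (hgt : ∀ r, ρ < r → ∀ᶠ x in atTop, 1 < x ^ r * f x) :
    Tendsto (fun x => log (f x) / log x) atTop (𝓝 (-ρ)) := by
  rw [tendsto_order]
  constructor
  · intro a ha
    filter_upwards [hgt ((ρ - a) / 2) (by linarith), hf, eventually_gt_atTop 1] with x h hfx hx
    have := (neg_lt_log_div_log_iff hx hfx).2 h
    linarith
  · intro a ha
    filter_upwards [hlt ((ρ - a) / 2) (by linarith), hf, eventually_gt_atTop 1] with x h hfx hx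
    have := (log_div_log_le_neg_iff hx hfx).2 h
    linarith

lemma rpow_mul_tendsto_iff_tendsto_log_div_log (hf : ∀ᶠ x in atTop, f x ≤ 1) (ρ : ℝ) :
    ((∀ r : ℝ, 0 ≤ r → r < ρ → Tendsto (fun x => x ^ r * f x) atTop (𝓝 0)) ∧
      (∀ r : ℝ, ρ < r → Tendsto (fun x => x ^ r * f x) atTop atTop)) ↔
    (∀ᶠ x in atTop, 0 < f x) ∧ Tendsto (fun x => log (f x) / log x) atTop (𝓝 (-ρ)) := by
  constructor
  · rintro ⟨hzero, htop⟩
    have hpos : ∀ᶠ x in atTop, 0 < f x := by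
      filter_upwards [(htop (ρ + 1) (lt_add_one ρ)).eventually_gt_atTop 0,
        eventually_gt_atTop 0] with x h hx
      exact pos_of_mul_pos_right h (rpow_pos_of_pos hx _).le
    refine ⟨hpos, tendsto_log_div_log_of_rpow_mul hpos (fun r hr => ?_)
      (fun r hr => (htop r hr).eventually_gt_atTop 1)⟩
    rcases le_or_gt 0 r with hr₀ | hr₀
    · exact (hzero r hr₀ hr).eventually_le_const one_pos
    · filter_upwards [hf, hpos, eventually_ge_atTop 1] with x hfx hpx hx
      exact (mul_le_of_le_one_left hpx.le (rpow_le_one_of_one_le_of_nonpos hx hr₀.le)).trans hfx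
  · rintro ⟨hpos, hlog⟩
    exact ⟨fun r _ hr => tendsto_rpow_mul_nhds_zero_of_tendsto_log_div_log hpos hlog (by linarith),
      fun r hr => tendsto_rpow_mul_atTop_of_tendsto_log_div_log hpos hlog (by linarith)⟩

lemma exists_div_rpow_of_tendsto_log_div_log (hf : ∀ᶠ x in atTop, 0 < f x) {ρ : ℝ}
    (hlog : Tendsto (fun x => log (f x) / log x) atTop (𝓝 (-ρ))) :
    ∃ L : ℝ → ℝ, (∀ x, 0 < x → 0 < L x) ∧
      Tendsto (fun x => f x / (L x / x ^ ρ)) atTop (𝓝 1) ∧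
      Tendsto (fun x => log (L x) / log x) atTop (𝓝 0) := by
  refine ⟨fun x => if 0 < f x then x ^ ρ * f x else 1, fun x hx => ?_, ?_, ?_⟩
  · dsimp only
    split_ifs with h
    exacts [mul_pos (rpow_pos_of_pos hx ρ) h, one_pos]
  · refine tendsto_const_nhds.congr' ?_
    filter_upwards [hf, eventually_gt_atTop 0] with x hfx hx
    rw [if_pos hfx, mul_div_cancel_left₀ _ (rpow_pos_of_pos hx ρ).ne', div_self hfx.ne']
  · have := (tendsto_const_nhds (x := ρ)).add hlog
    rw [add_neg_cancel] at this
    refine this.congr' ?_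
    filter_upwards [hf, eventually_gt_atTop 1] with x hfx hx
    have hx₀ : 0 < x := by linarith
    rw [if_pos hfx, log_mul (rpow_pos_of_pos hx₀ ρ).ne' hfx.ne', log_rpow hx₀, add_div,
      mul_div_cancel_right₀ ρ (log_pos hx).ne']

lemma tendsto_log_div_log_of_tendsto_div_div_rpow {L : ℝ → ℝ} (hL : ∀ x, 0 < x → 0 < L x) {ρ : ℝ}
    (hratio : Tendsto (fun x => f x / (L x / x ^ ρ)) atTop (𝓝 1))
    (hlog : Tendsto (fun x => log (L x) / log x) atTop (𝓝 0)) :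
    (∀ᶠ x in atTop, 0 < f x) ∧ Tendsto (fun x => log (f x) / log x) atTop (𝓝 (-ρ)) := by
  have hscale : ∀ᶠ x in atTop, 0 < L x / x ^ ρ := by
    filter_upwards [eventually_gt_atTop 0] with x hx
    exact div_pos (hL x hx) (rpow_pos_of_pos hx ρ)
  have hpos : ∀ᶠ x in atTop, 0 < f x := by
    filter_upwards [hratio.eventually_const_lt one_pos, hscale] with x h hs
    exact (div_pos_iff_of_pos_right hs).1 h
  have hratio_log : Tendsto (fun x => log (f x / (L x / x ^ ρ)) / log x) atTop (𝓝 0) :=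
    (log_one ▸ hratio.log one_ne_zero).div_atTop tendsto_log_atTop
  have := (hratio_log.add hlog).sub_const ρ
  rw [add_zero, zero_sub] at this
  refine ⟨hpos, this.congr' ?_⟩
  filter_upwards [hpos, eventually_gt_atTop 1] with x hfx hx
  have hx₀ : 0 < x := by linarith
  have hLx := hL x hx₀
  have hxρ := rpow_pos_of_pos hx₀ ρ
  rw [log_div hfx.ne' (by positivity), log_div hLx.ne' hxρ.ne', log_rpow hx₀]
  field_simp [(log_pos hx).ne']
  ring

end LogRatio

theorem stmt10_general {Ω : Type*} [MeasurableSpace Ω] (μ : Measure Ω) [IsProbabilityMeasure μ]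
    (X : Ω → ℝ) (ρ : ℝ) :
    ((∀ r : ℝ, 0 ≤ r → r < ρ →
        Tendsto (fun x : ℝ => x ^ r * (μ {ω | X ω > x}).toReal) atTop (nhds 0)) ∧
     (∀ r : ℝ, ρ < r →
        Tendsto (fun x : ℝ => x ^ r * (μ {ω | X ω > x}).toReal) atTop atTop)) ↔
    (∃ L : ℝ → ℝ, (∀ x : ℝ, 0 < x → 0 < L x) ∧
        Tendsto (fun x : ℝ => (μ {ω | X ω > x}).toReal / (L x / x ^ ρ)) atTop (nhds 1) ∧
        Tendsto (fun x : ℝ => Real.log (L x) / Real.log x) atTop (nhds 0)) := by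
  have htail_le_one : ∀ᶠ x : ℝ in atTop, (μ {ω | X ω > x}).toReal ≤ 1 :=
    Eventually.of_forall fun _ => measureReal_le_one
  rw [rpow_mul_tendsto_iff_tendsto_log_div_log htail_le_one ρ]
  exact ⟨fun ⟨hpos, hlog⟩ => exists_div_rpow_of_tendsto_log_div_log hpos hlog,
    fun ⟨_, hL, hratio, hlog⟩ => tendsto_log_div_log_of_tendsto_div_div_rpow hL hratio hlog⟩

theorem stmt10 {Ω : Type*} [MeasurableSpace Ω] (μ : Measure Ω) [IsProbabilityMeasure μ]
    (X : Ω → ℝ) (hX : Measurable X) (ρ : ℝ) (hρ : 0 ≤ ρ) :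
    ((∀ r : ℝ, 0 ≤ r → r < ρ →
        Tendsto (fun x : ℝ => x ^ r * (μ {ω | X ω > x}).toReal) atTop (nhds 0)) ∧
     (∀ r : ℝ, ρ < r →
        Tendsto (fun x : ℝ => x ^ r * (μ {ω | X ω > x}).toReal) atTop atTop)) ↔
    (∃ L : ℝ → ℝ, (∀ x : ℝ, 0 < x → 0 < L x) ∧
        Tendsto (fun x : ℝ => (μ {ω | X ω > x}).toReal / (L x / x ^ ρ)) atTop (nhds 1) ∧
        Tendsto (fun x : ℝ => Real.log (L x) / Real.log x) atTop (nhds 0)) :=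
  stmt10_general μ X ρ
end

section
/- Let {X_n} be i.i.d. with P(X > x) ~ (log x)^τ h(x)/x^ρ as x → ∞, where 0 < ρ < ∞, τ ∈ ℝ, and h : [0,∞) → (0,∞) is monotone with h(x²)/h(x) → 1. Then for every real x, P(log max_{1≤k≤n} X_k ≤ (ln n + τ ln ln n + ln h(n) − τ ln ρ + x)/ρ) → exp(−e^{−x}). -/
open MeasureTheory ProbabilityTheory Filter
open scoped ENNReal

open Topology

/-!
For `u ≥ 1`, `Log y ≤ u ↔ y ≤ exp u`, so by independence the probability in question is
`(1 - F̄(exp uₙ))ⁿ`, and it suffices that `n F̄(exp uₙ) → e^{-x}`.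

Put `G t = log h(eᵗ)`. The hypothesis on `h` says `G (2t) - G t → 0`; as `G` is monotone, this
gives `G s - G t → 0` whenever `s / t` tends to a positive constant, and `G t = o(t)`.
With `t = ln n` the latter gives `ρ uₙ / t → 1`, and by the choice of `uₙ`,
`log (n (log e^{uₙ})^τ h(e^{uₙ}) e^{-ρ uₙ}) = τ log (ρ uₙ / t) + (G uₙ - G t) - x → -x`.
-/

section DoublingIncrements

variable {g : ℝ → ℝ}

lemma tendsto_sub_comp_two_pow_mul (hg : Tendsto (fun t => g (2 * t) - g t) atTop (𝓝 0))
    (k : ℕ) : Tendsto (fun t => g (2 ^ k * t) - g t) atTop (𝓝 0) := by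
  induction k with
  | zero => simp
  | succ k ih =>
    have hk : Tendsto (fun t : ℝ => 2 ^ k * t) atTop atTop :=
      tendsto_id.const_mul_atTop (by positivity)
    have := (hg.comp hk).add ih
    rw [add_zero] at this
    refine this.congr fun t => ?_
    simp only [Function.comp, pow_succ, mul_comm _ (2 : ℝ), mul_assoc]
    ring

lemma Monotone.isLittleO_id_of_tendsto_sub (hmono : Monotone g)
    (hg : Tendsto (fun t => g (2 * t) - g t) atTop (𝓝 0)) : g =o[atTop] id := by
  refine Asymptotics.isLittleO_iff.2 fun c hc => ?_
  obtain ⟨T, hT⟩ := eventually_atTop.1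
    ((hg.eventually (ge_mem_nhds (half_pos hc))).and (eventually_ge_atTop 1))
  have hT1 : 1 ≤ T := (hT T le_rfl).2
  have hchain : ∀ k : ℕ, ∀ t ≤ 2 ^ k * T, g t ≤ g T + k * (c / 2) := by
    intro k
    induction k with
    | zero => intro t ht; simpa using hmono (by simpa using ht)
    | succ k ih =>
      intro t ht
      have h2k : (1 : ℝ) ≤ 2 ^ k := one_le_pow₀ one_le_two
      set s := max (t / 2) T
      have hs : s ≤ 2 ^ k * T := max_le (by rw [pow_succ] at ht; linarith) (by nlinarith)
      calc g t ≤ g (2 * s) := hmono (by linarith [le_max_left (t / 2) T])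
        _ ≤ g s + c / 2 := by linarith [(hT s (le_max_right _ _)).1]
        _ ≤ g T + (k + 1) * (c / 2) := by linarith [ih s hs]
        _ = _ := by push_cast; ring
  filter_upwards [eventually_ge_atTop ((2 * g T + c) / c), eventually_ge_atTop (-g 0 / c),
    eventually_ge_atTop 0] with t ht1 ht2 ht0
  have hceil : (⌈t⌉₊ : ℝ) < t + 1 := Nat.ceil_lt_add_one ht0
  have hupper : g t ≤ g T + ⌈t⌉₊ * (c / 2) := by
    refine hchain _ t ?_
    have : (⌈t⌉₊ : ℝ) < 2 ^ ⌈t⌉₊ := by exact_mod_cast Nat.lt_two_pow_self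
    nlinarith [Nat.le_ceil t]
  rw [div_le_iff₀ hc] at ht1 ht2
  rw [Real.norm_eq_abs, Real.norm_eq_abs, id, abs_of_nonneg ht0, abs_le]
  constructor <;> nlinarith [hmono ht0]

lemma isLittleO_id_of_tendsto_sub (hmono : Monotone g ∨ Antitone g)
    (hg : Tendsto (fun t => g (2 * t) - g t) atTop (𝓝 0)) : g =o[atTop] id := by
  rcases hmono with hmono | hanti
  · exact hmono.isLittleO_id_of_tendsto_sub hg
  · simpa using (hanti.neg.isLittleO_id_of_tendsto_sub
      (by simpa [neg_add_eq_sub] using hg.neg)).neg_left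

lemma Monotone.tendsto_sub_of_tendsto_div (hmono : Monotone g)
    (hg : Tendsto (fun t => g (2 * t) - g t) atTop (𝓝 0)) {ι : Type*} {l : Filter ι}
    {s t : ι → ℝ} {c : ℝ} (hc : 0 < c) (ht : Tendsto t l atTop)
    (hst : Tendsto (fun i => s i / t i) l (𝓝 c)) :
    Tendsto (fun i => g (s i) - g (t i)) l (𝓝 0) := by
  obtain ⟨k, hk⟩ := pow_unbounded_of_one_lt (max c c⁻¹) one_lt_two
  have hK : (0 : ℝ) < 2 ^ k := by positivity
  have hcK : c < 2 ^ k := (le_max_left _ _).trans_lt hk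
  have hKc : (2 ^ k)⁻¹ < c := inv_lt_of_inv_lt₀ hc ((le_max_right _ _).trans_lt hk)
  have hbounds : ∀ᶠ i in l, t i / 2 ^ k ≤ s i ∧ s i ≤ 2 ^ k * t i := by
    filter_upwards [hst.eventually (Ioo_mem_nhds hKc hcK), ht.eventually_gt_atTop 0]
      with i ⟨hlow, hup⟩ hti
    rw [inv_lt_iff_one_lt_mul₀ hK, div_mul_eq_mul_div, lt_div_iff₀ hti] at hlow
    rw [div_lt_iff₀ hti] at hup
    rw [div_le_iff₀ hK]
    constructor <;> nlinarith
  have hup := (tendsto_sub_comp_two_pow_mul hg k).comp ht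
  have hlow := ((tendsto_sub_comp_two_pow_mul hg k).comp (ht.atTop_div_const hK)).neg
  rw [neg_zero] at hlow
  refine tendsto_of_tendsto_of_tendsto_of_le_of_le' hlow hup ?_ ?_
  · filter_upwards [hbounds] with i hi
    simp only [Function.comp, mul_div_cancel₀ _ hK.ne', neg_sub]
    linarith [hmono hi.1]
  · filter_upwards [hbounds] with i hi
    simp only [Function.comp]
    linarith [hmono hi.2]

lemma tendsto_sub_of_tendsto_div (hmono : Monotone g ∨ Antitone g)
    (hg : Tendsto (fun t => g (2 * t) - g t) atTop (𝓝 0)) {ι : Type*} {l : Filter ι}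
    {s t : ι → ℝ} {c : ℝ} (hc : 0 < c) (ht : Tendsto t l atTop)
    (hst : Tendsto (fun i => s i / t i) l (𝓝 c)) :
    Tendsto (fun i => g (s i) - g (t i)) l (𝓝 0) := by
  rcases hmono with hmono | hanti
  · exact hmono.tendsto_sub_of_tendsto_div hg hc ht hst
  · simpa [neg_add_eq_sub] using (hanti.neg.tendsto_sub_of_tendsto_div
      (by simpa [neg_add_eq_sub] using hg.neg) hc ht hst).neg

end DoublingIncrements

section SlowVariation

variable {h : ℝ → ℝ}

lemma monotone_or_antitone_log_comp_exp (hpos : ∀ x, 0 ≤ x → 0 < h x)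
    (hmono : Monotone h ∨ Antitone h) :
    Monotone (fun t => Real.log (h (Real.exp t))) ∨
      Antitone (fun t => Real.log (h (Real.exp t))) :=
  hmono.imp
    (fun hm _ _ hab => Real.log_le_log (hpos _ (Real.exp_pos _).le) (hm (Real.exp_le_exp.2 hab)))
    (fun ha _ _ hab => Real.log_le_log (hpos _ (Real.exp_pos _).le) (ha (Real.exp_le_exp.2 hab)))

lemma tendsto_log_comp_exp_two_mul_sub (hpos : ∀ x, 0 ≤ x → 0 < h x)
    (hslow : Tendsto (fun x => h (x ^ 2) / h x) atTop (𝓝 1)) :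
    Tendsto (fun t => Real.log (h (Real.exp (2 * t))) - Real.log (h (Real.exp t))) atTop
      (𝓝 0) := by
  have := (hslow.comp Real.tendsto_exp_atTop).log one_ne_zero
  rw [Real.log_one] at this
  refine this.congr fun t => ?_
  dsimp only [Function.comp_apply]
  rw [← Real.exp_nat_mul, Nat.cast_ofNat,
    Real.log_div (hpos _ (Real.exp_pos _).le).ne' (hpos _ (Real.exp_pos _).le).ne']

end SlowVariation

-- At `t = ln n` and `G t = log h(eᵗ)` this is the level `uₙ` of the theorem.
noncomputable def gumbelLevel (ρ τ x : ℝ) (G : ℝ → ℝ) (t : ℝ) : ℝ :=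
  (t + τ * Real.log t + G t - τ * Real.log ρ + x) / ρ

section GumbelLevel

variable {ρ τ x : ℝ} {G : ℝ → ℝ}

lemma tendsto_gumbelLevel_div (hρ : 0 < ρ) (hG : G =o[atTop] id) :
    Tendsto (fun t => gumbelLevel ρ τ x G t / t) atTop (𝓝 ρ⁻¹) := by
  have hlog := Real.isLittleO_log_id_atTop.tendsto_div_nhds_zero
  have hG' := hG.tendsto_div_nhds_zero
  have hconst : Tendsto (fun t : ℝ => (x - τ * Real.log ρ) / t) atTop (𝓝 0) :=
    tendsto_const_nhds.div_atTop tendsto_id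
  have := ((((hlog.const_mul τ).const_add 1).add hG').add hconst).div_const ρ
  rw [mul_zero, add_zero, add_zero, add_zero, one_div] at this
  refine this.congr' ?_
  filter_upwards [eventually_ne_atTop 0] with t ht
  simp only [gumbelLevel, id]
  field_simp
  ring

lemma tendsto_gumbelLevel_atTop (hρ : 0 < ρ) (hG : G =o[atTop] id) :
    Tendsto (gumbelLevel ρ τ x G) atTop atTop :=
  ((tendsto_gumbelLevel_div hρ hG).pos_mul_atTop (inv_pos.2 hρ) tendsto_id).congr'
    (by filter_upwards [eventually_ne_atTop 0] with t ht using div_mul_cancel₀ _ ht)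

lemma tendsto_gumbelLevel_exponent (hρ : 0 < ρ) (hmono : Monotone G ∨ Antitone G)
    (hG : Tendsto (fun t => G (2 * t) - G t) atTop (𝓝 0)) :
    Tendsto (fun t => t + τ * Real.log (gumbelLevel ρ τ x G t) + G (gumbelLevel ρ τ x G t) -
      ρ * gumbelLevel ρ τ x G t) atTop (𝓝 (-x)) := by
  have hGo := isLittleO_id_of_tendsto_sub hmono hG
  have hdiv := tendsto_gumbelLevel_div (τ := τ) (x := x) hρ hGo
  have hratio := ((hdiv.const_mul ρ).log (by positivity)).const_mul τ
  rw [mul_inv_cancel₀ hρ.ne', Real.log_one, mul_zero] at hratio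
  have hGsub := tendsto_sub_of_tendsto_div hmono hG (inv_pos.2 hρ) tendsto_id hdiv
  have := (hratio.add hGsub).sub_const x
  rw [add_zero, zero_sub] at this
  refine this.congr' ?_
  filter_upwards [eventually_gt_atTop 0,
    (tendsto_gumbelLevel_atTop (τ := τ) (x := x) hρ hGo).eventually_gt_atTop 0] with t ht hb
  -- substituting `ρ b = t + τ log t + G t - τ log ρ + x`, the exponent is
  -- `τ log (ρ b / t) + (G b - G t) - x`
  rw [mul_div_assoc', Real.log_div (by positivity) ht.ne', Real.log_mul hρ.ne' hb.ne']
  simp only [id, gumbelLevel, mul_div_cancel₀ _ hρ.ne']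
  ring

end GumbelLevel

lemma tendsto_gumbelLevel_log_comp_exp_atTop {ρ τ x : ℝ} {h : ℝ → ℝ} (hρ : 0 < ρ)
    (hpos : ∀ x, 0 ≤ x → 0 < h x) (hmono : Monotone h ∨ Antitone h)
    (hslow : Tendsto (fun x => h (x ^ 2) / h x) atTop (𝓝 1)) :
    Tendsto (gumbelLevel ρ τ x (fun s => Real.log (h (Real.exp s)))) atTop atTop :=
  tendsto_gumbelLevel_atTop hρ (isLittleO_id_of_tendsto_sub
    (monotone_or_antitone_log_comp_exp hpos hmono) (tendsto_log_comp_exp_two_mul_sub hpos hslow))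

lemma Log_exp {a : ℝ} (ha : 1 ≤ a) : Log (Real.exp a) = a := by
  rw [Log, max_eq_right (Real.exp_le_exp.2 ha), Real.log_exp]

lemma Log_le_iff_le_exp {y a : ℝ} (ha : 1 ≤ a) : Log y ≤ a ↔ y ≤ Real.exp a := by
  rw [Log, Real.log_le_iff_le_exp (lt_max_of_lt_left (Real.exp_pos 1)), max_le_iff,
    and_iff_right (Real.exp_le_exp.2 ha)]

noncomputable def regVarTail (ρ τ : ℝ) (h : ℝ → ℝ) (y : ℝ) : ℝ := Log y ^ τ * h y / y ^ ρ

lemma regVarTail_pos {ρ τ y : ℝ} {h : ℝ → ℝ} (hy : 0 < y) (hh : 0 < h y) :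
    0 < regVarTail ρ τ h y := by
  have hLog : 0 < Log y :=
    Real.log_pos ((Real.one_lt_exp_iff.2 one_pos).trans_le (le_max_left _ _))
  unfold regVarTail
  positivity

lemma tendsto_exp_mul_regVarTail_gumbelLevel {ρ τ x : ℝ} {h : ℝ → ℝ} (hρ : 0 < ρ)
    (hpos : ∀ x, 0 ≤ x → 0 < h x) (hmono : Monotone h ∨ Antitone h)
    (hslow : Tendsto (fun x => h (x ^ 2) / h x) atTop (𝓝 1)) :
    Tendsto (fun t => Real.exp t * regVarTail ρ τ h
      (Real.exp (gumbelLevel ρ τ x (fun s => Real.log (h (Real.exp s))) t)))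
      atTop (𝓝 (Real.exp (-x))) := by
  refine ((Real.continuous_exp.tendsto _).comp (tendsto_gumbelLevel_exponent (τ := τ) (x := x) hρ
    (monotone_or_antitone_log_comp_exp hpos hmono)
    (tendsto_log_comp_exp_two_mul_sub hpos hslow))).congr' ?_
  filter_upwards [(tendsto_gumbelLevel_log_comp_exp_atTop (τ := τ) (x := x) hρ hpos hmono
    hslow).eventually_ge_atTop 1] with t hb
  rw [Function.comp_apply, regVarTail, Log_exp hb, Real.rpow_def_of_pos (by linarith),
    ← Real.exp_mul, Real.exp_sub, Real.exp_add, Real.exp_add,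
    Real.exp_log (hpos _ (Real.exp_pos _).le), mul_comm (Real.log _) τ,
    mul_comm (gumbelLevel ρ τ x _ t) ρ]
  ring

lemma tendsto_nat_mul_tail_gumbelLevel {ρ τ x : ℝ} {h F : ℝ → ℝ} (hρ : 0 < ρ)
    (hpos : ∀ x, 0 ≤ x → 0 < h x) (hmono : Monotone h ∨ Antitone h)
    (hslow : Tendsto (fun x => h (x ^ 2) / h x) atTop (𝓝 1))
    (hF : Tendsto (fun y => F y / regVarTail ρ τ h y) atTop (𝓝 1)) :
    Tendsto (fun n : ℕ =>
      n * F (Real.exp (gumbelLevel ρ τ x (fun s => Real.log (h (Real.exp s))) (Real.log n))))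
      atTop (𝓝 (Real.exp (-x))) := by
  have hlog : Tendsto (fun n : ℕ => Real.log n) atTop atTop :=
    Real.tendsto_log_atTop.comp tendsto_natCast_atTop_atTop
  have := ((tendsto_exp_mul_regVarTail_gumbelLevel (τ := τ) (x := x) hρ hpos hmono hslow).mul
    (hF.comp (Real.tendsto_exp_atTop.comp
      (tendsto_gumbelLevel_log_comp_exp_atTop (τ := τ) (x := x) hρ hpos hmono hslow)))).comp hlog
  rw [mul_one] at this
  refine this.congr' ?_
  filter_upwards [eventually_ne_atTop 0] with n hn
  simp only [Function.comp_apply, Real.exp_log (Nat.cast_pos.2 (Nat.pos_of_ne_zero hn))]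
  rw [mul_assoc,
    mul_div_cancel₀ _ (regVarTail_pos (Real.exp_pos _) (hpos _ (Real.exp_pos _).le)).ne']

lemma toReal_measure_pmax_le {Ω : Type*} [MeasurableSpace Ω] {μ : Measure Ω}
    [IsProbabilityMeasure μ] {X : ℕ → Ω → ℝ} (hmeas : Measurable (X 0))
    (hindep : iIndepFun X μ) (hident : ∀ n, IdentDistrib (X n) (X 0) μ μ) {n : ℕ} (hn : n ≠ 0)
    (t : ℝ) : (μ {ω | pmax X n ω ≤ t}).toReal = (1 - (μ {ω | X 0 ω > t}).toReal) ^ n := by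
  have hset : {ω | pmax X n ω ≤ t} = ⋂ i ∈ Finset.range n, X i ⁻¹' Set.Iic t := by
    ext ω
    simp [pmax, hn, Finset.sup'_le_iff]
  have hcompl : X 0 ⁻¹' Set.Iic t = {ω | X 0 ω > t}ᶜ := by
    ext ω
    simp
  have hms : MeasurableSet {ω | X 0 ω > t} := hmeas measurableSet_Ioi
  rw [hset, hindep.measure_inter_preimage_eq_mul _ fun _ _ => measurableSet_Iic,
    Finset.prod_congr rfl fun i _ => (hident i).measure_mem_eq measurableSet_Iic,
    Finset.prod_const, Finset.card_range, ENNReal.toReal_pow, hcompl,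
    prob_compl_eq_one_sub hms, ENNReal.toReal_sub_of_le prob_le_one
    ENNReal.one_ne_top, ENNReal.toReal_one]

theorem stmt13 {Ω : Type*} [MeasurableSpace Ω] (μ : Measure Ω) [IsProbabilityMeasure μ]
    (X : ℕ → Ω → ℝ) (hmeas : ∀ n, Measurable (X n))
    (hindep : iIndepFun X μ)
    (hident : ∀ n, IdentDistrib (X n) (X 0) μ μ)
    (ρ τ : ℝ) (hρ : 0 < ρ) (h : ℝ → ℝ) (hhpos : ∀ x : ℝ, 0 ≤ x → 0 < h x)
    (hhmono : Monotone h ∨ Antitone h)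
    (hhslow : Tendsto (fun x : ℝ => h (x ^ 2) / h x) atTop (nhds 1))
    (htail : Tendsto (fun x : ℝ =>
        (μ {ω | X 0 ω > x}).toReal / ((Log x ^ τ * h x) / x ^ ρ)) atTop (nhds 1)) :
    ∀ x : ℝ,
      Tendsto (fun n : ℕ =>
          (μ {ω | Log (pmax X n ω) ≤
            (Real.log n + τ * Real.log (Real.log n) + Real.log (h n) - τ * Real.log ρ + x) / ρ}).toReal)
        atTop (nhds (Real.exp (-Real.exp (-x)))) := by
  intro x
  set u : ℕ → ℝ := fun n => gumbelLevel ρ τ x (fun s => Real.log (h (Real.exp s))) (Real.log n)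
  have hu : Tendsto u atTop atTop :=
    (tendsto_gumbelLevel_log_comp_exp_atTop hρ hhpos hhmono hhslow).comp
      (Real.tendsto_log_atTop.comp tendsto_natCast_atTop_atTop)
  have hmean := (tendsto_nat_mul_tail_gumbelLevel (x := x)
    (F := fun y => (μ {ω | X 0 ω > y}).toReal) hρ hhpos hhmono hhslow htail).neg
  simp only [← mul_neg] at hmean
  refine (Real.tendsto_one_add_pow_exp_of_tendsto hmean).congr' ?_
  filter_upwards [eventually_ne_atTop 0, hu.eventually_ge_atTop 1] with n hn hun
  have hlevel : (Real.log n + τ * Real.log (Real.log n) + Real.log (h n) - τ * Real.log ρ + x) / ρ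
      = u n := by
    simp only [u, gumbelLevel, Real.exp_log (Nat.cast_pos.2 (Nat.pos_of_ne_zero hn))]
  simp only [hlevel, Log_le_iff_le_exp hun]
  rw [toReal_measure_pmax_le (hmeas 0) hindep hident hn, sub_eq_add_neg]
end
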